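/- Let E > 0, let T_A > T_B > 0, and let 2 ≤ n_A ≤ n_B be natural numbers. On (ℂ²)^{⊗(n_A+n_B)} with standard basis {e_b : b ∈ {0,1}^{n_A+n_B}}, let H be the diagonal Hamiltonian with H e_b = E · wgt(b) · e_b (wgt = Hamming weight), and let ρ = γ_{T_A}^{⊗ n_A} ⊗ γ_{T_B}^{⊗ n_B}, where γ_T = diag(1, e^{−E/T})/(1 + e^{−E/T}). Then there exists a unitary U with tr(U ρ U† H) < tr(ρ H) if and only if T_A/T_B > n_A/(n_A − 1). -/

import Mathlib

/-!
A diagonal state `diag p` is passive for a diagonal Hamiltonian `diag h` exactly when `p` and `h`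
antivary. If they do, the matrix `|U b c|²` of a unitary `U` is doubly stochastic, so by Birkhoff's
theorem the energy after `U` is a convex combination of energies of permuted populations, none of
which is lower by the rearrangement inequality; if they do not, swapping two levels with
`h i < h j` and `p i < p j` lowers the energy.

For the product Gibbs state, `p b ∝ exp (-E θ b)` with `θ b = a / T_A + c / T_B` for `a` hot and
`c` cold excitations, so passivity means that `θ` grows with the number `a + c` of excitations.
This holds iff one extra excitation outweighs moving all `n_A` hot excitations to cold qubits,
i.e. `(n_A - 1) / T_B ≤ n_A / T_A`; otherwise the state with all hot qubits excited beats the one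
with `n_A - 1` cold qubits excited.
-/

/-- The Gibbs occupation probability of level `j ∈ {0,1}` of a two-level
system with energy gap `E` at temperature `T`. -/
noncomputable def qubitProb (E T : ℝ) (j : Fin 2) : ℝ :=
  (if j = 0 then 1 else Real.exp (-E / T)) / (1 + Real.exp (-E / T))

open Finset Matrix Real

section Passivity

variable {ι : Type*} [Fintype ι] [DecidableEq ι]

lemma re_trace_diagonal_mul_diagonal (p h : ι → ℝ) :
    (trace (diagonal (fun b => (p b : ℂ)) * diagonal (fun b => (h b : ℂ)))).re =
      p ⬝ᵥ h := by
  simp [diagonal_mul_diagonal, trace_diagonal, Complex.re_sum, dotProduct]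

lemma re_trace_conj_diagonal_mul_diagonal (U : Matrix ι ι ℂ) (p h : ι → ℝ) :
    (trace (U * diagonal (fun b => (p b : ℂ)) * star U * diagonal (fun b => (h b : ℂ)))).re =
      (of fun b c => Complex.normSq (U b c)) *ᵥ p ⬝ᵥ h := by
  simp only [trace, Matrix.diag, mul_diagonal, Complex.re_sum, dotProduct, mulVec, of_apply]
  refine sum_congr rfl fun b _ => ?_
  rw [mul_apply]
  simp only [mul_diagonal, star_apply, RCLike.star_def, sum_mul, Complex.re_sum]
  refine sum_congr rfl fun c _ => ?_
  rw [mul_right_comm _ _ (starRingEnd ℂ _), Complex.mul_conj]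
  simp only [← Complex.ofReal_mul, Complex.ofReal_re]

lemma normSq_mem_doublyStochastic {U : Matrix ι ι ℂ} (hU : U ∈ unitaryGroup ι ℂ) :
    (of fun b c => Complex.normSq (U b c)) ∈ doublyStochastic ℝ ι := by
  refine mem_doublyStochastic_iff_sum.2
    ⟨fun _ _ => Complex.normSq_nonneg _, fun b => ?_, fun c => ?_⟩
  · have := congr_fun₂ (mem_unitaryGroup_iff.1 hU) b b
    simp only [mul_apply, star_apply, RCLike.star_def, Complex.mul_conj, one_apply_eq] at this
    exact_mod_cast this
  · have := congr_fun₂ (mem_unitaryGroup_iff'.1 hU) c c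
    simp only [mul_apply, star_apply, RCLike.star_def, Complex.conj_mul', one_apply_eq] at this
    simp only [of_apply, Complex.normSq_eq_norm_sq]
    exact_mod_cast this

lemma dotProduct_le_mulVec_dotProduct_of_antivary {D : Matrix ι ι ℝ}
    (hD : D ∈ doublyStochastic ℝ ι) {p h : ι → ℝ} (hph : Antivary p h) :
    p ⬝ᵥ h ≤ D *ᵥ p ⬝ᵥ h := by
  rw [← SetLike.mem_coe, doublyStochastic_eq_convexHull_permMatrix] at hD
  refine convexHull_min ?_
    (convex_halfSpace_ge (f := fun D : Matrix ι ι ℝ => D *ᵥ p ⬝ᵥ h) ?_ _) hD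
  · rintro _ ⟨σ, rfl⟩
    simpa [permMatrix_mulVec, dotProduct] using hph.sum_mul_le_sum_comp_perm_mul (σ := σ)
  · exact ⟨fun D D' => by simp [add_mulVec, add_dotProduct],
      fun c D => by simp [smul_mulVec, smul_dotProduct]⟩

lemma permMatrix_mem_unitaryGroup (σ : Equiv.Perm ι) :
    σ.permMatrix ℂ ∈ unitaryGroup ι ℂ := by
  rw [mem_unitaryGroup_iff, star_eq_conjTranspose, conjTranspose_permMatrix, ← permMatrix_mul,
    inv_mul_cancel, permMatrix_one]

lemma sum_comp_swap_mul_lt_sum_mul {p h : ι → ℝ} {i j : ι} (hh : h i < h j) (hp : p i < p j) :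
    ∑ b, p (Equiv.swap i j b) * h b < ∑ b, p b * h b := by
  have hij : i ≠ j := by rintro rfl; exact hh.false
  rw [← sub_pos, ← sum_sub_distrib, Fintype.sum_eq_add i j hij fun b hb => by
    rw [Equiv.swap_apply_of_ne_of_ne hb.1 hb.2, sub_self]]
  simp only [Equiv.swap_apply_left, Equiv.swap_apply_right]
  nlinarith

theorem exists_unitary_re_trace_lt_iff_not_antivary (p h : ι → ℝ) :
    (∃ U ∈ unitaryGroup ι ℂ,
      (trace (U * diagonal (fun b => (p b : ℂ)) * star U * diagonal (fun b => (h b : ℂ)))).re <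
        (trace (diagonal (fun b => (p b : ℂ)) * diagonal (fun b => (h b : ℂ)))).re) ↔
      ¬ Antivary p h := by
  simp only [re_trace_conj_diagonal_mul_diagonal, re_trace_diagonal_mul_diagonal]
  constructor
  · rintro ⟨U, hU, hlt⟩ hph
    exact hlt.not_ge
      (dotProduct_le_mulVec_dotProduct_of_antivary (normSq_mem_doublyStochastic hU) hph)
  · intro hph
    obtain ⟨i, j, hh, hp⟩ : ∃ i j, h i < h j ∧ p i < p j := by
      simpa [Antivary] using hph
    refine ⟨(Equiv.swap i j).permMatrix ℂ, permMatrix_mem_unitaryGroup _, ?_⟩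
    have hD : (of fun b c => Complex.normSq ((Equiv.swap i j).permMatrix ℂ b c)) =
        (Equiv.swap i j).permMatrix ℝ := by
      ext b c
      simp [PEquiv.toMatrix_apply, apply_ite]
    rw [hD, permMatrix_mulVec]
    exact sum_comp_swap_mul_lt_sum_mul hh hp

end Passivity

lemma qubitProb_eq_exp (E T : ℝ) (j : Fin 2) :
    qubitProb E T j = exp (-E * ((j : ℕ) / T)) / (1 + exp (-E / T)) := by
  fin_cases j <;> simp [qubitProb, div_eq_mul_inv]

section GibbsState

variable {ι : Type*} [Fintype ι]

lemma prod_qubitProb_eq_exp (E : ℝ) (T : ι → ℝ) (b : ι → Fin 2) :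
    ∏ i, qubitProb E (T i) (b i) =
      exp (-E * ∑ i, ((b i : ℕ) : ℝ) / T i) / ∏ i, (1 + exp (-E / T i)) := by
  simp only [qubitProb_eq_exp, prod_div_distrib, ← exp_sum, mul_sum]

lemma antivary_gibbs_energy_iff {E : ℝ} (hE : 0 < E) (T : ι → ℝ) :
    Antivary (fun b : ι → Fin 2 => ∏ i, qubitProb E (T i) (b i))
        (fun b => E * ∑ i, ((b i : ℕ) : ℝ)) ↔
      Monovary (fun b : ι → Fin 2 => ∑ i, ((b i : ℕ) : ℝ) / T i)
        (fun b => ∑ i, ((b i : ℕ) : ℝ)) := by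
  have hZ : 0 < ∏ i, (1 + exp (-E / T i)) := prod_pos fun i _ => by positivity
  simp only [Antivary, Monovary, prod_qubitProb_eq_exp, div_le_div_iff_of_pos_right hZ,
    exp_le_exp, mul_lt_mul_iff_right₀ hE, neg_mul, neg_le_neg_iff, mul_le_mul_iff_right₀ hE]

end GibbsState

lemma sum_fin_add_div_ite {m n : ℕ} (f : Fin (m + n) → ℝ) (u v : ℝ) :
    ∑ i, f i / (if (i : ℕ) < m then u else v) =
      (∑ i : Fin m, f (Fin.castAdd n i)) / u + (∑ j : Fin n, f (Fin.natAdd m j)) / v := by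
  simp [Fin.sum_univ_add, sum_div]

lemma div_add_div_le_div_add_div {T_A T_B n a c a' c' : ℝ} (hTB : 0 < T_B) (hT : T_B ≤ T_A)
    (hK : (n - 1) * T_A ≤ n * T_B) (ha : 0 ≤ a) (ha' : a' ≤ n) (hw : a + c + 1 ≤ a' + c') :
    a / T_A + c / T_B ≤ a' / T_A + c' / T_B := by
  have hTA : 0 < T_A := hTB.trans_le hT
  calc a / T_A + c / T_B ≤ (a + c) / T_B := by
        rw [add_div]; gcongr
    _ ≤ (a' + c' - 1) / T_B := by gcongr; linarith
    _ ≤ a' / T_A + c' / T_B := by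
        rw [div_add_div _ _ hTA.ne' hTB.ne', div_le_div_iff₀ hTB (by positivity)]
        nlinarith [mul_le_mul_of_nonneg_right ha' (sub_nonneg.2 hT)]

lemma sum_fin_two_val_le {n : ℕ} (b : Fin n → Fin 2) : ∑ i, ((b i : ℕ) : ℝ) ≤ n := by
  simpa using sum_le_card_nsmul univ (fun i => ((b i : ℕ) : ℝ)) 1 fun i _ =>
    mod_cast Nat.le_of_lt_succ (b i).isLt

lemma monovary_excitations_iff {nA nB : ℕ} {T_A T_B : ℝ} (hTB : 0 < T_B) (hT : T_B ≤ T_A)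
    (hn : nA ≤ nB + 1) :
    Monovary (fun b : Fin (nA + nB) → Fin 2 =>
        ∑ i, ((b i : ℕ) : ℝ) / (if (i : ℕ) < nA then T_A else T_B))
        (fun b => ∑ i, ((b i : ℕ) : ℝ)) ↔
      ((nA : ℝ) - 1) * T_A ≤ nA * T_B := by
  simp only [Monovary, sum_fin_add_div_ite]
  simp only [Fin.sum_univ_add]
  constructor
  · intro hmono
    by_contra! hlt
    have hnA : 1 ≤ nA := by
      have : (1 : ℝ) ≤ nA := by
        nlinarith [hTB.trans_le hT, (Nat.cast_nonneg nA : (0 : ℝ) ≤ nA)]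
      exact_mod_cast this
    have hcold :
        ∑ j : Fin nB, (((if (j : ℕ) < nA - 1 then 1 else 0 : Fin 2) : ℕ) : ℝ) = nA - 1 := by
      simp [apply_ite, Fin.card_filter_val_lt, min_eq_right (by omega : nA - 1 ≤ nB), hnA]
    have key : ((nA : ℝ) - 1) / T_B ≤ nA / T_A := by
      simpa [hcold] using
        @hmono (Fin.append (fun _ => 0) fun j : Fin nB => if (j : ℕ) < nA - 1 then 1 else 0)
          (Fin.append (fun _ => 1) fun _ => 0) (by simp [hcold])
    rw [div_le_div_iff₀ hTB (hTB.trans_le hT)] at key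
    linarith
  · intro hK b c hbc
    exact div_add_div_le_div_add_div hTB hT hK (by positivity) (sum_fin_two_val_le _)
      (by norm_cast at hbc ⊢)

/-- **Complexity of Using Small Temperature Gaps, case `n_A ≤ n_B`.**
On `n_A` hot and `n_B` cold equal-gap qubits, a unitary heat engine exists if
and only if `T_A/T_B > n_A/(n_A - 1)`. -/
theorem stmt_9 (E T_A T_B : ℝ) (hE : 0 < E) (hTB : 0 < T_B) (hT : T_B < T_A)
    (nA nB : ℕ) (hnA : 2 ≤ nA) (hn : nA ≤ nB) :
    (∃ U ∈ Matrix.unitaryGroup (Fin (nA + nB) → Fin 2) ℂ,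
      (Matrix.trace (U *
          Matrix.diagonal (fun b : Fin (nA + nB) → Fin 2 =>
            ((∏ i : Fin (nA + nB), qubitProb E (if (i : ℕ) < nA then T_A else T_B) (b i) : ℝ) : ℂ)) *
          star U *
          Matrix.diagonal (fun b : Fin (nA + nB) → Fin 2 =>
            ((E * ∑ i, ((b i : ℕ) : ℝ) : ℝ) : ℂ)))).re <
      (Matrix.trace (
          Matrix.diagonal (fun b : Fin (nA + nB) → Fin 2 =>
            ((∏ i : Fin (nA + nB), qubitProb E (if (i : ℕ) < nA then T_A else T_B) (b i) : ℝ) : ℂ)) *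
          Matrix.diagonal (fun b : Fin (nA + nB) → Fin 2 =>
            ((E * ∑ i, ((b i : ℕ) : ℝ) : ℝ) : ℂ)))).re) ↔
    (nA : ℝ) / ((nA : ℝ) - 1) < T_A / T_B := by
  have hnA' : (0 : ℝ) < nA - 1 := by
    have : (2 : ℝ) ≤ nA := mod_cast hnA
    linarith
  rw [exists_unitary_re_trace_lt_iff_not_antivary, antivary_gibbs_energy_iff hE,
    monovary_excitations_iff hTB hT.le (by omega), div_lt_div_iff₀ hnA' hTB, not_le, mul_comm T_A]
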